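/- Every metric tree T satisfies ℓ-asdim T ≤ 1, i.e., there exists C > 0 such that for every sufficiently large R > 0 the tree T admits a covering by subsets of diameter at most C·R that splits into 2 families, each of which is R-disjoint. -/

import Mathlib

/-- `X` admits a covering split into `m` families of subsets, each family
`R`-disjoint, with all members of diameter at most `D`. -/
def ColoredCover (X : Type*) [MetricSpace X] (m : ℕ) (R D : ℝ) : Prop :=
  ∃ B : Fin m → Set (Set X),
    (∀ x : X, ∃ i : Fin m, ∃ U ∈ B i, x ∈ U) ∧
    (∀ i : Fin m, ∀ U ∈ B i, ∀ x ∈ U, ∀ y ∈ U, dist x y ≤ D) ∧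
    (∀ i : Fin m, ∀ U ∈ B i, ∀ V ∈ B i, U ≠ V → ∀ x ∈ U, ∀ y ∈ V, R ≤ dist x y)

/-- `asdim X ≤ n`: for every sufficiently large `R > 0` there are `D > 0` and a
covering of `X` by `D`-bounded subsets split into `n+1` `R`-disjoint families. -/
def AsdimLE (X : Type*) [MetricSpace X] (n : ℕ) : Prop :=
  ∃ R₀ > (0 : ℝ), ∀ R ≥ R₀, ∃ D > (0 : ℝ), ColoredCover X (n + 1) R D

/-- `ℓ-asdim X ≤ n`: there is `C > 0` such that for every sufficiently large
`R > 0` there is a covering of `X` by `C·R`-bounded subsets split into `n+1`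
`R`-disjoint families. -/
def LAsdimLE (X : Type*) [MetricSpace X] (n : ℕ) : Prop :=
  ∃ C > (0 : ℝ), ∃ R₀ > (0 : ℝ), ∀ R ≥ R₀, ColoredCover X (n + 1) R (C * R)

/-- The asymptotic dimension of `X`, as an extended natural number. -/
noncomputable def asdim (X : Type*) [MetricSpace X] : ℕ∞ :=
  sInf {m : ℕ∞ | ∃ n : ℕ, m = (n : ℕ∞) ∧ AsdimLE X n}

/-- The linearly-controlled asymptotic dimension of `X`, as an extended
natural number. -/
noncomputable def lasdim (X : Type*) [MetricSpace X] : ℕ∞ :=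
  sInf {m : ℕ∞ | ∃ n : ℕ, m = (n : ℕ∞) ∧ LAsdimLE X n}

/-- `s` is (the image of) a geodesic segment from `x` to `y`. -/
def IsGeodesicSeg (X : Type*) [MetricSpace X] (s : Set X) (x y : X) : Prop :=
  ∃ γ : ℝ → X, γ 0 = x ∧ γ (dist x y) = y ∧
    (∀ a ∈ Set.Icc (0 : ℝ) (dist x y), ∀ b ∈ Set.Icc (0 : ℝ) (dist x y),
      dist (γ a) (γ b) = |a - b|) ∧
    s = γ '' Set.Icc (0 : ℝ) (dist x y)

/-- A geodesic metric space: any two points are joined by a geodesic segment. -/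
def GeodesicSpace (X : Type*) [MetricSpace X] : Prop :=
  ∀ x y : X, ∃ s : Set X, IsGeodesicSeg X s x y

/-- A tripod: a union of three geodesic segments `xt ∪ yt ∪ zt` having only
the point `t` in common (possibly degenerate). -/
def IsTripod (X : Type*) [MetricSpace X] (s : Set X) : Prop :=
  ∃ (x y z t : X) (sx sy sz : Set X),
    IsGeodesicSeg X sx x t ∧ IsGeodesicSeg X sy y t ∧ IsGeodesicSeg X sz z t ∧
    sx ∩ sy = {t} ∧ sy ∩ sz = {t} ∧ sx ∩ sz = {t} ∧
    s = sx ∪ sy ∪ sz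

/-- A metric tree: a geodesic metric space in which every geodesic triangle
is a tripod. -/
def IsMetricTree (X : Type*) [MetricSpace X] : Prop :=
  GeodesicSpace X ∧
  ∀ (x y z : X) (sxy syz szx : Set X),
    IsGeodesicSeg X sxy x y → IsGeodesicSeg X syz y z → IsGeodesicSeg X szx z x →
    IsTripod X (sxy ∪ syz ∪ szx)

/-!
A metric tree is 0-hyperbolic: since every geodesic triangle is a tripod, every point `x`
has a projection `m` onto a geodesic `[w, z]`, and then `(x | z)_w = dist w m`; comparing the
projections of `x` and `y` on the same geodesic gives `(x | y)_w ≥ min (x | z)_w (y | z)_w`.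

In a 0-hyperbolic space, `(u | v)_w > (2k - 1)R` is an equivalence relation on the annulus
`2kR ≤ dist w u < 2(k+1)R`. Its classes have diameter at most `6R`, and two points of the
annulus at distance `< R` are equivalent; annuli whose indices differ by at least two are
`2R` apart. So the classes in even annuli and those in odd annuli form two `R`-disjoint families.
-/

open Set

section Geodesic

variable {X : Type*} [MetricSpace X] {s : Set X} {x y p q : X}

lemma dist_apply_zero_of_dist_eq_abs_sub {γ : ℝ → X} {D a : ℝ}
    (hγ : ∀ a ∈ Icc 0 D, ∀ b ∈ Icc 0 D, dist (γ a) (γ b) = |a - b|)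
    (ha : a ∈ Icc 0 D) :
    dist (γ 0) (γ a) = a := by
  rw [hγ 0 ⟨le_rfl, ha.1.trans ha.2⟩ a ha, zero_sub, abs_neg, abs_of_nonneg ha.1]

lemma continuousOn_of_dist_eq_abs_sub {γ : ℝ → X} {I : Set ℝ}
    (hγ : ∀ a ∈ I, ∀ b ∈ I, dist (γ a) (γ b) = |a - b|) : ContinuousOn γ I :=
  (LipschitzOnWith.of_dist_le_mul fun a ha b hb => by
    rw [hγ a ha b hb, Real.dist_eq, NNReal.coe_one, one_mul]).continuousOn

namespace IsGeodesicSeg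

lemma left_mem (g : IsGeodesicSeg X s x y) : x ∈ s := by
  obtain ⟨γ, h0, -, -, rfl⟩ := g
  exact ⟨0, ⟨le_rfl, dist_nonneg⟩, h0⟩

lemma right_mem (g : IsGeodesicSeg X s x y) : y ∈ s := by
  obtain ⟨γ, -, h1, -, rfl⟩ := g
  exact ⟨dist x y, ⟨dist_nonneg, le_rfl⟩, h1⟩

lemma symm (g : IsGeodesicSeg X s x y) : IsGeodesicSeg X s y x := by
  obtain ⟨γ, h0, h1, hγ, rfl⟩ := g
  have hIcc : ∀ a ∈ Icc 0 (dist x y), dist x y - a ∈ Icc 0 (dist x y) := fun a ha =>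
    ⟨by linarith [ha.2], by linarith [ha.1]⟩
  refine ⟨fun a => γ (dist x y - a), by simpa, by simpa [dist_comm y x],
    fun a ha b hb => ?_, ?_⟩
  · rw [dist_comm y x] at ha hb
    rw [hγ _ (hIcc a ha) _ (hIcc b hb), ← abs_neg]
    ring_nf
  · rw [dist_comm y x, show (fun a => γ (dist x y - a)) = γ ∘ (dist x y - ·) from rfl,
      image_comp, image_const_sub_Icc, sub_self, sub_zero]

lemma isCompact (g : IsGeodesicSeg X s x y) : IsCompact s := by
  obtain ⟨γ, -, -, hγ, rfl⟩ := g
  exact isCompact_Icc.image_of_continuousOn (continuousOn_of_dist_eq_abs_sub hγ)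

lemma dist_left_mem_Icc (g : IsGeodesicSeg X s x y) (hp : p ∈ s) :
    dist x p ∈ Icc 0 (dist x y) := by
  obtain ⟨γ, rfl, -, hγ, rfl⟩ := g
  obtain ⟨a, ha, rfl⟩ := hp
  rwa [dist_apply_zero_of_dist_eq_abs_sub hγ ha]

lemma dist_eq_abs_sub (g : IsGeodesicSeg X s x y) (hp : p ∈ s) (hq : q ∈ s) :
    dist p q = |dist x p - dist x q| := by
  obtain ⟨γ, rfl, -, hγ, rfl⟩ := g
  obtain ⟨a, ha, rfl⟩ := hp
  obtain ⟨b, hb, rfl⟩ := hq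
  rw [hγ a ha b hb, dist_apply_zero_of_dist_eq_abs_sub hγ ha,
    dist_apply_zero_of_dist_eq_abs_sub hγ hb]

lemma dist_add_dist (g : IsGeodesicSeg X s x y) (hp : p ∈ s) :
    dist x p + dist p y = dist x y := by
  rw [g.dist_eq_abs_sub hp g.right_mem, abs_sub_comm,
    abs_of_nonneg (sub_nonneg.2 (g.dist_left_mem_Icc hp).2)]
  ring

lemma exists_dist_eq (g : IsGeodesicSeg X s x y) {r : ℝ} (hr : r ∈ Icc 0 (dist x y)) :
    ∃ p ∈ s, dist x p = r := by
  obtain ⟨γ, rfl, -, hγ, rfl⟩ := g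
  exact ⟨γ r, mem_image_of_mem γ hr, dist_apply_zero_of_dist_eq_abs_sub hγ hr⟩

lemma isPreconnected_sep (g : IsGeodesicSeg X s x y) {J : Set ℝ} (hJ : J.OrdConnected) :
    IsPreconnected {p ∈ s | dist x p ∈ J} := by
  obtain ⟨γ, rfl, -, hγ, rfl⟩ := g
  have : {p ∈ γ '' Icc 0 (dist (γ 0) y) | dist (γ 0) p ∈ J} =
      γ '' (Icc 0 (dist (γ 0) y) ∩ J) := by
    ext p
    constructor
    · rintro ⟨⟨a, ha, rfl⟩, hJa⟩
      exact ⟨a, ⟨ha, by rwa [dist_apply_zero_of_dist_eq_abs_sub hγ ha] at hJa⟩, rfl⟩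
    · rintro ⟨a, ⟨ha, hJa⟩, rfl⟩
      exact ⟨mem_image_of_mem γ ha, by rwa [dist_apply_zero_of_dist_eq_abs_sub hγ ha]⟩
  rw [this]
  exact (ordConnected_Icc.inter hJ).isPreconnected.image γ
    ((continuousOn_of_dist_eq_abs_sub hγ).mono inter_subset_left)

lemma isPreconnected (g : IsGeodesicSeg X s x y) : IsPreconnected s := by
  simpa using g.isPreconnected_sep ordConnected_univ

end IsGeodesicSeg

end Geodesic

section Tripod

variable {X : Type*} [MetricSpace X] {T S : Set X} {t a b : X}

def IsTripodAt (X : Type*) [MetricSpace X] (T : Set X) (t : X) : Prop :=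
  ∃ (x y z : X) (sx sy sz : Set X),
    IsGeodesicSeg X sx x t ∧ IsGeodesicSeg X sy y t ∧ IsGeodesicSeg X sz z t ∧
    sx ∩ sy = {t} ∧ sy ∩ sz = {t} ∧ sx ∩ sz = {t} ∧ T = sx ∪ sy ∪ sz

lemma IsTripod.exists_isTripodAt (h : IsTripod X T) : ∃ t, IsTripodAt X T t :=
  let ⟨x, y, z, t, h⟩ := h
  ⟨t, x, y, z, h⟩

lemma IsPreconnected.subset_or_subset_of_inter_subset_singleton {A B : Set X}
    (hS : IsPreconnected S) (hA : IsClosed A) (hB : IsClosed B) (hAB : A ∩ B ⊆ {t})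
    (htS : t ∉ S) (hSAB : S ⊆ A ∪ B) : S ⊆ A ∨ S ⊆ B :=
  isPreconnected_iff_subset_of_disjoint_closed.1 hS A B hA hB hSAB <|
    eq_empty_of_forall_notMem fun _ ⟨hpS, hpAB⟩ => htS (hAB hpAB ▸ hpS)

namespace IsTripodAt

lemma center_mem (hT : IsTripodAt X T t) : t ∈ T := by
  obtain ⟨x, -, -, sx, -, -, gx, -, -, -, -, -, rfl⟩ := hT
  exact Or.inl (Or.inl gx.right_mem)

lemma exists_leg (hT : IsTripodAt X T t) (hS : IsPreconnected S) (hST : S ⊆ T)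
    (htS : t ∉ S) : ∃ (v : X) (L : Set X), IsGeodesicSeg X L v t ∧ S ⊆ L := by
  obtain ⟨x, y, z, sx, sy, sz, gx, gy, gz, hxy, hyz, hxz, rfl⟩ := hT
  rw [union_assoc] at hST
  rcases hS.subset_or_subset_of_inter_subset_singleton gx.isCompact.isClosed
    (gy.isCompact.isClosed.union gz.isCompact.isClosed)
    (by rw [inter_union_distrib_left, hxy, hxz, union_self]) htS hST with h | h
  · exact ⟨x, sx, gx, h⟩
  rcases hS.subset_or_subset_of_inter_subset_singleton gy.isCompact.isClosed
    gz.isCompact.isClosed hyz.subset htS h with h | h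
  · exact ⟨y, sy, gy, h⟩
  · exact ⟨z, sz, gz, h⟩

lemma dist_eq_abs_sub (hT : IsTripodAt X T t) (hS : IsPreconnected S) (hST : S ⊆ T)
    (htS : t ∉ S) (ha : a ∈ S) (hb : b ∈ S) : dist a b = |dist a t - dist b t| := by
  obtain ⟨v, L, gL, hSL⟩ := hT.exists_leg hS hST htS
  rw [gL.symm.dist_eq_abs_sub (hSL ha) (hSL hb), dist_comm t a, dist_comm t b]

lemma notMem_of_isGeodesicSeg (hT : IsTripodAt X T t) (hS : IsPreconnected S)
    (hST : S ⊆ T) (htS : t ∉ S) (ha : a ∈ S) (hb : b ∈ S) {s : Set X}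
    (g : IsGeodesicSeg X s a b) : t ∉ s := fun hts => by
  have hsum := g.dist_add_dist hts
  have hab := hT.dist_eq_abs_sub hS hST htS ha hb
  have hat : 0 < dist a t := dist_pos.2 (ne_of_mem_of_not_mem ha htS)
  have hbt : 0 < dist b t := dist_pos.2 (ne_of_mem_of_not_mem hb htS)
  rw [dist_comm t b] at hsum
  rcases abs_cases (dist a t - dist b t) with ⟨h, -⟩ | ⟨h, -⟩ <;> linarith

end IsTripodAt

end Tripod

section Median

variable {X : Type*} [MetricSpace X] {T s sxy syz szx : Set X} {t x y z : X}

lemma IsTripodAt.exists_median_mem_of_mem (hT : IsTripodAt X T t)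
    (gxy : IsGeodesicSeg X sxy x y) (gyz : IsGeodesicSeg X syz y z)
    (gzx : IsGeodesicSeg X szx z x) (hxyT : sxy ⊆ T) (hyzT : syz ⊆ T) (htzx : t ∈ szx) :
    ∃ m ∈ sxy, dist x z = dist x m + dist m z ∧ dist y z = dist y m + dist m z := by
  have hzx := gzx.dist_add_dist htzx
  have cxz := dist_comm x z
  have cxy := dist_comm x y
  have ctx := dist_comm t x
  have cty := dist_comm t y
  have ctz := dist_comm t z
  by_cases htyz : t ∈ syz
  · have hyz := gyz.dist_add_dist htyz
    by_cases htxy : t ∈ sxy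
    · exact ⟨t, htxy, by linarith, by linarith⟩
    have hxy := hT.dist_eq_abs_sub gxy.isPreconnected hxyT htxy gxy.left_mem gxy.right_mem
    rcases le_total (dist x t) (dist y t) with hle | hle
    · rw [abs_of_nonpos (by linarith)] at hxy
      exact ⟨x, gxy.left_mem, by simp, by linarith⟩
    · rw [abs_of_nonneg (by linarith)] at hxy
      exact ⟨y, gxy.right_mem, by linarith, by simp⟩
  have hS : IsPreconnected (sxy ∪ syz) :=
    gxy.isPreconnected.union y gxy.right_mem gyz.left_mem gyz.isPreconnected
  have htxy : t ∈ sxy := by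
    by_contra htxy
    exact hT.notMem_of_isGeodesicSeg hS (union_subset hxyT hyzT)
      (not_or.2 ⟨htxy, htyz⟩) (Or.inr gyz.right_mem) (Or.inl gxy.left_mem) gzx htzx
  have hxy := gxy.dist_add_dist htxy
  have hyt : 0 < dist y t := dist_pos.2 (ne_of_mem_of_not_mem gyz.left_mem htyz)
  have hzt : 0 < dist z t := dist_pos.2 (ne_of_mem_of_not_mem gyz.right_mem htyz)
  -- The part of `[x, y]` beyond `t` and the side `[y, z]` lie in one leg.
  set P := {p ∈ sxy | dist x p ∈ Ioi (dist x t)}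
  have hP : IsPreconnected (P ∪ syz) :=
    (gxy.isPreconnected_sep ordConnected_Ioi).union y
      ⟨gxy.right_mem, by rw [mem_Ioi]; linarith⟩ gyz.left_mem gyz.isPreconnected
  have hPT : P ∪ syz ⊆ T := union_subset (fun p hp => hxyT hp.1) hyzT
  have htP : t ∉ P ∪ syz := by
    rintro (⟨-, h⟩ | h)
    · exact lt_irrefl (dist x t) h
    · exact htyz h
  have hzP : z ∈ P ∪ syz := Or.inr gyz.right_mem
  rcases le_total (dist y t) (dist z t) with hle | hle
  · have hyz := hT.dist_eq_abs_sub hP hPT htP (Or.inr gyz.left_mem) hzP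
    rw [abs_of_nonpos (by linarith)] at hyz
    exact ⟨y, gxy.right_mem, by linarith, by simp⟩
  · obtain ⟨p, hp, hxp⟩ := gxy.exists_dist_eq
      (r := dist x t + dist z t) ⟨by positivity, by linarith⟩
    have hpt : dist p t = dist z t := by
      rw [dist_comm, gxy.dist_eq_abs_sub htxy hp, hxp, sub_add_cancel_left, abs_neg,
        abs_of_pos hzt]
    have hpz : p = z := dist_eq_zero.1 <| by
      rw [hT.dist_eq_abs_sub hP hPT htP (Or.inl ⟨hp, by rw [mem_Ioi]; linarith⟩) hzP, hpt,
        sub_self, abs_zero]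
    exact ⟨z, hpz ▸ hp, by simp, by simp⟩

lemma IsMetricTree.exists_median_mem (hX : IsMetricTree X) (g : IsGeodesicSeg X s x y)
    (z : X) : ∃ m ∈ s, dist x z = dist x m + dist m z ∧ dist y z = dist y m + dist m z := by
  obtain ⟨syz, gyz⟩ := hX.1 y z
  obtain ⟨szx, gzx⟩ := hX.1 z x
  obtain ⟨t, hT⟩ := (hX.2 x y z s syz szx g gyz gzx).exists_isTripodAt
  have hsT : s ⊆ s ∪ syz ∪ szx := subset_union_left.trans subset_union_left
  have hyzT : syz ⊆ s ∪ syz ∪ szx := subset_union_right.trans subset_union_left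
  have hzxT : szx ⊆ s ∪ syz ∪ szx := subset_union_right
  by_cases htzx : t ∈ szx
  · exact hT.exists_median_mem_of_mem g gyz gzx hsT hyzT htzx
  have htyz : t ∈ syz := by
    by_contra htyz
    have hS : IsPreconnected (syz ∪ szx) :=
      gyz.isPreconnected.union z gyz.right_mem gzx.left_mem gzx.isPreconnected
    have hts := hT.notMem_of_isGeodesicSeg hS (union_subset hyzT hzxT)
      (not_or.2 ⟨htyz, htzx⟩) (Or.inr gzx.right_mem) (Or.inl gyz.left_mem) g
    rcases hT.center_mem with (h | h) | h <;> contradiction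
  obtain ⟨m, hm, hy, hx⟩ := hT.exists_median_mem_of_mem g.symm gzx.symm gyz.symm hsT hzxT htyz
  exact ⟨m, hm, hx, hy⟩

end Median

section ZeroHyperbolic

variable {X : Type*} [MetricSpace X]

noncomputable def gromovProduct (w x y : X) : ℝ := (dist w x + dist w y - dist x y) / 2

lemma gromovProduct_comm (w x y : X) : gromovProduct w x y = gromovProduct w y x := by
  rw [gromovProduct, gromovProduct, dist_comm x y, add_comm (dist w x)]

lemma gromovProduct_self (w x : X) : gromovProduct w x x = dist w x := by
  rw [gromovProduct, dist_self]
  ring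

def IsZeroHyperbolic (X : Type*) [MetricSpace X] : Prop :=
  ∀ w x y z : X, min (gromovProduct w x z) (gromovProduct w y z) ≤ gromovProduct w x y

/-- `(x | z)_w` is the distance from `w` to the projection of `x` onto a geodesic `[w, z]`. -/
lemma IsMetricTree.isZeroHyperbolic (hX : IsMetricTree X) : IsZeroHyperbolic X := by
  intro w x y z
  obtain ⟨s, g⟩ := hX.1 w z
  obtain ⟨m, hm, hwx, hzx⟩ := hX.exists_median_mem g x
  obtain ⟨n, hn, hwy, hzy⟩ := hX.exists_median_mem g y
  have hwm := g.dist_add_dist hm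
  have hwn := g.dist_add_dist hn
  have hmn := g.dist_eq_abs_sub hm hn
  have hxy : dist x y ≤ dist x m + dist m n + dist n y := dist_triangle4 x m n y
  have hxz : gromovProduct w x z = dist w m := by
    rw [gromovProduct]
    linarith [dist_comm x z, dist_comm m z]
  have hyz : gromovProduct w y z = dist w n := by
    rw [gromovProduct]
    linarith [dist_comm y z, dist_comm n z]
  rw [hxz, hyz, gromovProduct]
  rcases le_total (dist w m) (dist w n) with hle | hle
  · rw [abs_of_nonpos (by linarith)] at hmn
    exact (min_le_left _ _).trans (by linarith [dist_comm m x])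
  · rw [abs_of_nonneg (by linarith)] at hmn
    exact (min_le_right _ _).trans (by linarith [dist_comm m x])

end ZeroHyperbolic

section Cover

variable {X : Type*} [MetricSpace X] {w x x' y z u v : X} {R : ℝ} {k k' : ℕ}

lemma IsZeroHyperbolic.lt_gromovProduct (h : IsZeroHyperbolic X) {θ : ℝ}
    (hxz : θ < gromovProduct w x z) (hzy : θ < gromovProduct w z y) :
    θ < gromovProduct w x y :=
  (lt_min hxz (gromovProduct_comm w z y ▸ hzy)).trans_le (h w x y z)

/-- For fixed `k` and `R > 0` these sets partition the annulus `2kR ≤ dist w u < 2(k+1)R`. -/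
def annulusCluster (w : X) (R : ℝ) (k : ℕ) (x : X) : Set X :=
  {u | 2 * k * R ≤ dist w u ∧ dist w u < 2 * (k + 1) * R ∧
    (2 * k - 1) * R < gromovProduct w x u}

lemma mem_annulusCluster_self (hR : 0 < R) (h₁ : 2 * k * R ≤ dist w x)
    (h₂ : dist w x < 2 * (k + 1) * R) : x ∈ annulusCluster w R k x :=
  ⟨h₁, h₂, by rw [gromovProduct_self]; linarith⟩

lemma IsZeroHyperbolic.annulusCluster_eq (h : IsZeroHyperbolic X)
    (hxx' : (2 * k - 1) * R < gromovProduct w x x') :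
    annulusCluster w R k x = annulusCluster w R k x' := by
  ext u
  constructor
  · rintro ⟨h₁, h₂, hxu⟩
    exact ⟨h₁, h₂, h.lt_gromovProduct (gromovProduct_comm w x x' ▸ hxx') hxu⟩
  · rintro ⟨h₁, h₂, hx'u⟩
    exact ⟨h₁, h₂, h.lt_gromovProduct hxx' hx'u⟩

lemma IsZeroHyperbolic.dist_le_of_mem_annulusCluster (h : IsZeroHyperbolic X)
    (hu : u ∈ annulusCluster w R k x) (hv : v ∈ annulusCluster w R k x) :
    dist u v ≤ 6 * R := by
  have huv := h.lt_gromovProduct (gromovProduct_comm w x u ▸ hu.2.2) hv.2.2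
  rw [gromovProduct] at huv
  linarith [hu.2.1, hv.2.1]

lemma IsZeroHyperbolic.annulusCluster_eq_of_dist_lt (h : IsZeroHyperbolic X) (hR : 0 < R)
    (hu : u ∈ annulusCluster w R k x) (hv : v ∈ annulusCluster w R k x')
    (huv : dist u v < R) : annulusCluster w R k x = annulusCluster w R k x' := by
  have hθ : (2 * k - 1) * R < gromovProduct w u v := by
    rw [gromovProduct]
    linarith [hu.1, hv.1]
  exact h.annulusCluster_eq <|
    h.lt_gromovProduct hu.2.2 (h.lt_gromovProduct hθ (gromovProduct_comm w x' v ▸ hv.2.2))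

lemma le_dist_of_mem_annulusCluster (hR : 0 ≤ R) (hk : k + 2 ≤ k')
    (hu : u ∈ annulusCluster w R k x) (hv : v ∈ annulusCluster w R k' x') :
    2 * R ≤ dist u v := by
  have hkR : ((k : ℝ) + 2) * R ≤ k' * R :=
    mul_le_mul_of_nonneg_right (by exact_mod_cast hk) hR
  linarith [dist_triangle w u v, hu.2.1, hv.1]

lemma exists_annulus_index (hR : 0 < R) (r : ℝ) (hr : 0 ≤ r) :
    ∃ k : ℕ, 2 * k * R ≤ r ∧ r < 2 * (k + 1) * R := by
  have h2R : 0 < 2 * R := by positivity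
  refine ⟨⌊r / (2 * R)⌋₊, ?_, ?_⟩
  · linarith [(le_div_iff₀ h2R).1 (Nat.floor_le (div_nonneg hr h2R.le))]
  · linarith [(div_lt_iff₀ h2R).1 (Nat.lt_floor_add_one (r / (2 * R)))]

lemma IsZeroHyperbolic.coloredCover (h : IsZeroHyperbolic X) (w : X) (hR : 0 < R) :
    ColoredCover X 2 R (6 * R) := by
  refine ⟨fun i => {U | ∃ k x, k % 2 = i.val ∧ U = annulusCluster w R k x}, ?_, ?_, ?_⟩
  · intro x
    obtain ⟨k, h₁, h₂⟩ := exists_annulus_index hR (dist w x) dist_nonneg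
    exact ⟨⟨k % 2, k.mod_lt two_pos⟩, _, ⟨k, x, rfl, rfl⟩,
      mem_annulusCluster_self hR h₁ h₂⟩
  · rintro i U ⟨k, x, -, rfl⟩ u hu v hv
    exact h.dist_le_of_mem_annulusCluster hu hv
  · rintro i U ⟨k, x, hk, rfl⟩ V ⟨k', x', hk', rfl⟩ hUV u hu v hv
    by_contra! huv
    rcases lt_trichotomy k k' with hlt | rfl | hgt
    · linarith [le_dist_of_mem_annulusCluster hR.le (by omega) hu hv]
    · exact hUV (h.annulusCluster_eq_of_dist_lt hR hu hv huv)
    · linarith [le_dist_of_mem_annulusCluster hR.le (by omega) hv hu, dist_comm u v]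

lemma IsZeroHyperbolic.lasdimLE_one (h : IsZeroHyperbolic X) : LAsdimLE X 1 := by
  refine ⟨6, by norm_num, 1, one_pos, fun R hR => ?_⟩
  rcases isEmpty_or_nonempty X with hX | ⟨⟨w⟩⟩
  · exact ⟨fun _ => ∅, isEmptyElim, by simp, by simp⟩
  · exact h.coloredCover w (one_pos.trans_le hR)

end Cover

lemma lasdim_le_of_lasdimLE {X : Type*} [MetricSpace X] {n : ℕ} (h : LAsdimLE X n) :
    lasdim X ≤ n :=
  sInf_le ⟨n, rfl, h⟩

/-- Every metric tree `T` satisfies `ℓ-asdim T ≤ 1`: there is `C > 0` such that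
for every sufficiently large `R > 0` the tree admits a covering by subsets of
diameter at most `C·R` split into two `R`-disjoint families. -/
theorem lasdim_metricTree_le_one (T : Type*) [MetricSpace T]
    (hT : IsMetricTree T) :
    LAsdimLE T 1 ∧ lasdim T ≤ 1 := by
  have h := hT.isZeroHyperbolic.lasdimLE_one
  exact ⟨h, lasdim_le_of_lasdimLE h⟩
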